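/- arXiv:2305.01748 — 2 statements merged into one kernel-verified Lean document; each statement's English description precedes it below -/
import Mathlib

section
/- Let r ≥ 3 and let G be an r-regular simple graph. Then every automorphism φ_H of the hypergraph dual H of G induces a unique automorphism φ_G of G such that for every vertex v of G, the image under φ_H of the adjacency set A(v) equals A(φ_G(v)). -/
/-- The adjacency set of a vertex `v`: the set of edges of `G` containing `v`,
viewed as a set of vertices of the hypergraph dual of `G`. -/
def adjSet {V : Type*} (G : SimpleGraph V) (v : V) : Set G.edgeSet :=
  {e : G.edgeSet | v ∈ (e : Sym2 V)}

lemma adjSet_inj {V : Type*} [Fintype V] (G : SimpleGraph V) (r : ℕ) (hr : 3 ≤ r)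
    (hreg : ∀ v : V, {e ∈ G.edgeSet | v ∈ e}.ncard = r)
    {v w : V} (h : adjSet G v = adjSet G w) : v = w := by
  by_contra hvw
  have hsub : {e ∈ G.edgeSet | v ∈ e} ⊆ {s(v, w)} := by
    rintro e ⟨he, hve⟩
    have : (⟨e, he⟩ : G.edgeSet) ∈ adjSet G v := hve
    rw [h] at this
    have hwe : w ∈ e := this
    have := (Sym2.mem_and_mem_iff hvw).mp ⟨hve, hwe⟩
    simpa using this
  have := Set.ncard_le_ncard hsub (Set.finite_singleton _)
  rw [hreg v, Set.ncard_singleton] at this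
  omega

lemma adj_iff_inter {V : Type*} (G : SimpleGraph V) (a b : V) :
    G.Adj a b ↔ a ≠ b ∧ (adjSet G a ∩ adjSet G b).Nonempty := by
  constructor
  · intro h
    refine ⟨h.ne, ⟨⟨s(a, b), G.mem_edgeSet.mpr h⟩, ?_, ?_⟩⟩
    · exact Sym2.mem_mk_left a b
    · exact Sym2.mem_mk_right a b
  · rintro ⟨hne, ⟨e, hea, heb⟩⟩
    have : (e : Sym2 V) = s(a, b) := (Sym2.mem_and_mem_iff hne).mp ⟨hea, heb⟩
    have he := e.2
    rw [this] at he
    exact G.mem_edgeSet.mp he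

theorem dual_automorphism_induces_graph_automorphism {V : Type*} [Fintype V]
    (G : SimpleGraph V) (r : ℕ) (hr : 3 ≤ r)
    (hreg : ∀ v : V, {e ∈ G.edgeSet | v ∈ e}.ncard = r)
    (ψ : G.edgeSet ≃ G.edgeSet)
    (hψ : ∀ v : V, ∃ w : V, ψ '' adjSet G v = adjSet G w) :
    ∃! f : V ≃ V, (∀ a b : V, G.Adj a b ↔ G.Adj (f a) (f b)) ∧
      ∀ v : V, ψ '' adjSet G v = adjSet G (f v) := by
  classical
  set f0 : V → V := fun v => (hψ v).choose with hf0
  have hf0s : ∀ v, ψ '' adjSet G v = adjSet G (f0 v) := fun v => (hψ v).choose_spec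
  have hinj : Function.Injective f0 := by
    intro v w h
    apply adjSet_inj G r hr hreg
    have := hf0s v
    rw [h, ← hf0s w] at this
    exact ψ.injective.image_injective this
  let f : V ≃ V := Equiv.ofBijective f0 (Finite.injective_iff_bijective.mp hinj)
  have hfv : ∀ v, f v = f0 v := fun _ => rfl
  have key : ∀ a b : V, (adjSet G a ∩ adjSet G b).Nonempty ↔
      (adjSet G (f0 a) ∩ adjSet G (f0 b)).Nonempty := by
    intro a b
    rw [← hf0s a, ← hf0s b, ← Set.image_inter ψ.injective,
      Set.image_nonempty]
  refine ⟨f, ⟨?_, fun v => by rw [hfv]; exact hf0s v⟩, ?_⟩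
  · intro a b
    rw [adj_iff_inter, adj_iff_inter, hfv, hfv, key]
    constructor
    · rintro ⟨hne, h⟩; exact ⟨fun hc => hne (hinj hc), h⟩
    · rintro ⟨hne, h⟩; exact ⟨fun hc => hne (hc ▸ rfl), h⟩
  · rintro g ⟨-, hg⟩
    ext v
    apply adjSet_inj G r hr hreg
    rw [← hg v, hfv, hf0s v]
end

section
/- Let k = 4 or k ≥ 6, and t ≥ 2. If φ is an automorphism of the Jiang–Nešetřil hypergraph G_{k,t} with φ(E_1) = E_1, then φ is the identity. -/
/-- Vertex type of the Jiang–Nešetřil hypergraph `G_{k,t}` with `n = t*k`: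
vertices `u_i`, `v_i` (for `i` modulo `n`) and `w_{i,j}` (for `j ∈ [k-3]`). -/
abbrev JNVert (n k : ℕ) := ZMod n ⊕ ZMod n ⊕ (ZMod n × Fin (k - 3))

def JNu (n k : ℕ) (i : ZMod n) : JNVert n k := Sum.inl i
def JNv (n k : ℕ) (i : ZMod n) : JNVert n k := Sum.inr (Sum.inl i)
def JNw (n k : ℕ) (i : ZMod n) (j : Fin (k - 3)) : JNVert n k := Sum.inr (Sum.inr (i, j))

/-- The L-edge `E_i = {v_i, u_i, v_{i+1}, w_{i,1}, …, w_{i,k-3}}`. -/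
def JNL (n k : ℕ) [NeZero n] (i : ZMod n) : Finset (JNVert n k) :=
  {JNv n k i, JNu n k i, JNv n k (i + 1)} ∪ Finset.univ.image (JNw n k i)

/-- The cyclic edge `E_{i,j} = {w_{i,j}, …, w_{i+k-1,j}}`. -/
def JNC (n k : ℕ) (i : ZMod n) (j : Fin (k - 3)) : Finset (JNVert n k) :=
  (Finset.range k).image (fun m : ℕ => JNw n k (i + (m : ZMod n)) j)

/-- The edge set of `G_{k,t}`: all L-edges together with the cyclic edges
`E_{i,j}` for `j ∈ [k-3]` and `i = j + s*k`, `s ∈ [t]`. -/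
def JNedges (t k : ℕ) [NeZero (t * k)] : Finset (Finset (JNVert (t * k) k)) :=
  Finset.univ.image (JNL (t * k) k) ∪
  Finset.univ.image (fun p : Fin t × Fin (k - 3) =>
    JNC (t * k) k ((((p.2 : ℕ) + 1) + (p.1 : ℕ) * k : ℕ) : ZMod (t * k)) p.2)

set_option linter.unusedSectionVars false

section helpers
variable {n k : ℕ} [NeZero n]

lemma mem_JNL {i : ZMod n} {x : JNVert n k} :
    x ∈ JNL n k i ↔ x = JNv n k i ∨ x = JNu n k i ∨ x = JNv n k (i + 1) ∨ ∃ j, x = JNw n k i j := by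
  simp [JNL, eq_comm]

lemma mem_JNC {i : ZMod n} {j : Fin (k-3)} {x : JNVert n k} :
    x ∈ JNC n k i j ↔ ∃ m < k, x = JNw n k (i + (m : ℕ)) j := by
  simp [JNC, eq_comm]

lemma u_mem_JNL {i a : ZMod n} : JNu n k i ∈ JNL n k a ↔ i = a := by
  simp [mem_JNL, JNu, JNv, JNw, eq_comm]

lemma u_notMem_JNC {i b : ZMod n} {j : Fin (k-3)} : JNu n k i ∉ JNC n k b j := by
  simp [mem_JNC, JNu, JNw]

lemma v_mem_JNL {i a : ZMod n} : JNv n k i ∈ JNL n k a ↔ i = a ∨ i = a + 1 := by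
  simp [mem_JNL, JNu, JNv, JNw]

lemma v_notMem_JNC {i b : ZMod n} {j : Fin (k-3)} : JNv n k i ∉ JNC n k b j := by
  simp [mem_JNC, JNv, JNw]

lemma w_mem_JNL {i a : ZMod n} {j : Fin (k-3)} : JNw n k i j ∈ JNL n k a ↔ i = a := by
  simp [mem_JNL, JNu, JNv, JNw, eq_comm]

lemma w_mem_JNC {i b : ZMod n} {j j' : Fin (k-3)} :
    JNw n k i j ∈ JNC n k b j' ↔ j = j' ∧ ∃ m < k, b + (m : ℕ) = i := by
  constructor
  · rw [mem_JNC]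
    rintro ⟨m, hm, h⟩
    simp only [JNw, Sum.inr.injEq, Prod.mk.injEq] at h
    exact ⟨h.2, m, hm, h.1.symm⟩
  · rintro ⟨rfl, m, hm, h⟩
    rw [mem_JNC]
    exact ⟨m, hm, by rw [h]⟩

lemma JNL_inj {a b : ZMod n} (h : JNL n k a = JNL n k b) : a = b := by
  have : JNu n k a ∈ JNL n k b := h ▸ u_mem_JNL.mpr rfl
  exact u_mem_JNL.mp this

lemma JNL_ne_JNC {a b : ZMod n} {j : Fin (k-3)} : JNL n k a ≠ JNC n k b j := by
  intro h
  exact u_notMem_JNC (h ▸ u_mem_JNL.mpr (rfl : a = a))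

lemma JNL_adj {a b : ZMod n} :
    ¬ Disjoint (JNL n k a) (JNL n k b) ↔ a = b ∨ a = b + 1 ∨ b = a + 1 := by
  rw [Finset.not_disjoint_iff]
  constructor
  · rintro ⟨x, hxa, hxb⟩
    rw [mem_JNL] at hxa
    rcases hxa with rfl | rfl | rfl | ⟨j, rfl⟩
    · rcases v_mem_JNL.mp hxb with h | h
      · exact Or.inl h
      · exact Or.inr (Or.inl h)
    · exact Or.inl (u_mem_JNL.mp hxb)
    · rcases v_mem_JNL.mp hxb with h | h
      · exact Or.inr (Or.inr h.symm)
      · exact Or.inl (add_right_cancel h)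
    · exact Or.inl (w_mem_JNL.mp hxb)
  · rintro (rfl | rfl | rfl)
    · exact ⟨JNu n k a, u_mem_JNL.mpr rfl, u_mem_JNL.mpr rfl⟩
    · exact ⟨JNv n k (b+1), v_mem_JNL.mpr (Or.inl rfl), v_mem_JNL.mpr (Or.inr rfl)⟩
    · exact ⟨JNv n k (a+1), v_mem_JNL.mpr (Or.inr rfl), v_mem_JNL.mpr (Or.inl rfl)⟩

lemma JNC_JNL_inter {b c : ZMod n} {j' : Fin (k-3)} {x : JNVert n k}
    (hC : x ∈ JNC n k b j') (hL : x ∈ JNL n k c) :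
    x = JNw n k c j' ∧ ∃ m < k, b + (m : ℕ) = c := by
  rw [mem_JNC] at hC
  obtain ⟨m, hm, rfl⟩ := hC
  rw [w_mem_JNL] at hL
  exact ⟨by rw [hL], m, hm, hL⟩

end helpers

section arith

lemma JN_cast_inj {n : ℕ} [NeZero n] {a b : ℕ} (ha : a < n) (hb : b < n)
    (h : (a : ZMod n) = (b : ZMod n)) : a = b := by
  have := congrArg ZMod.val h
  rwa [ZMod.val_cast_of_lt ha, ZMod.val_cast_of_lt hb] at this

lemma JN_block {n k : ℕ} [NeZero n] (hk : 1 ≤ k) (hkn : 2*k ≤ n) {m₀ m₁ : ℕ}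
    (h₀ : m₀ < k) (h₁ : m₁ < k)
    (h : (m₀ : ZMod n) = (m₁ : ZMod n) + ((k-1 : ℕ) : ZMod n)) : m₁ = 0 ∧ m₀ = k-1 := by
  rw [← Nat.cast_add] at h
  have := JN_cast_inj (by omega) (by omega) h
  omega

lemma JN_cover {t k : ℕ} [NeZero (t*k)] (hk : 0 < k) (c : ℕ) (i : ZMod (t*k)) :
    ∃ s : ℕ, s < t ∧ ∃ m : ℕ, m < k ∧ ((c + s*k + m : ℕ) : ZMod (t*k)) = i := by
  set x := (i - (c : ZMod (t*k))).val with hx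
  refine ⟨x / k, ?_, x % k, Nat.mod_lt _ hk, ?_⟩
  · have hxlt : x < t*k := ZMod.val_lt _
    exact (Nat.div_lt_iff_lt_mul hk).mpr hxlt
  · have hdm := Nat.div_add_mod x k
    have : c + x/k*k + x%k = c + x := by rw [mul_comm]; omega
    rw [this, Nat.cast_add, hx, ZMod.natCast_zmod_val]
    ring

lemma mem_JNedges {t k : ℕ} [NeZero (t*k)] {e : Finset (JNVert (t*k) k)} :
    e ∈ JNedges t k ↔ (∃ i, e = JNL (t*k) k i) ∨
      (∃ (s : Fin t) (j : Fin (k-3)),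
        e = JNC (t*k) k ((((j : ℕ) + 1) + (s : ℕ) * k : ℕ) : ZMod (t*k)) j) := by
  simp only [JNedges, Finset.mem_union, Finset.mem_image, Finset.mem_univ, true_and, Prod.exists]
  constructor
  · rintro (⟨i, rfl⟩ | ⟨s, j, rfl⟩)
    · exact Or.inl ⟨i, rfl⟩
    · exact Or.inr ⟨s, j, rfl⟩
  · rintro (⟨i, rfl⟩ | ⟨s, j, rfl⟩)
    · exact Or.inl ⟨i, rfl⟩
    · exact Or.inr ⟨s, j, rfl⟩

end arith

theorem automorphism_fixing_E1_is_identity (k t : ℕ) (hk : k = 4 ∨ 6 ≤ k) (ht : 2 ≤ t)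
    [NeZero (t * k)]
    (φ : JNVert (t * k) k ≃ JNVert (t * k) k)
    (hφ : ∀ e ∈ JNedges t k, e.image φ ∈ JNedges t k)
    (hE1 : (JNL (t * k) k 1).image φ = JNL (t * k) k 1) :
    φ = Equiv.refl (JNVert (t * k) k) := by
  have hk4 : 4 ≤ k := by rcases hk with rfl | h <;> omega
  have h2k : 2*k ≤ t*k := Nat.mul_le_mul_right k ht
  have hn8 : 8 ≤ t*k := by omega
  have hcast : ∀ {a b : ℕ}, a < t*k → b < t*k → ((a : ZMod (t*k)) = b) → a = b :=
    fun ha hb h => JN_cast_inj ha hb h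
  have hone : (1 : ZMod (t*k)) ≠ 0 := by
    intro h
    have : ((1:ℕ) : ZMod (t*k)) = ((0:ℕ) : ZMod (t*k)) := by push_cast; exact h
    exact absurd (hcast (by omega) (by omega) this) (by omega)
  have htwo : (2 : ZMod (t*k)) ≠ 0 := by
    intro h
    have : ((2:ℕ) : ZMod (t*k)) = ((0:ℕ) : ZMod (t*k)) := by push_cast; exact h
    exact absurd (hcast (by omega) (by omega) this) (by omega)
  have himg_inj : ∀ e₁ e₂ : Finset (JNVert (t*k) k), e₁.image φ = e₂.image φ → e₁ = e₂ :=
    fun _ _ h => Finset.image_injective φ.injective h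
  have hsurj : ∀ f ∈ JNedges t k, ∃ e ∈ JNedges t k, e.image φ = f := by
    intro f hf
    obtain ⟨e, he, hfe⟩ := Finset.surj_on_of_inj_on_of_card_le
      (s := JNedges t k) (t := JNedges t k) (fun e _ => e.image φ)
      (fun e he => hφ e he) (fun e₁ e₂ _ _ h => himg_inj _ _ h) le_rfl f hf
    exact ⟨e, he, hfe.symm⟩
  -- IsU : being contained in at most one edge
  set IsU : JNVert (t*k) k → Prop :=
    fun x => ∀ e₁ ∈ JNedges t k, ∀ e₂ ∈ JNedges t k, x ∈ e₁ → x ∈ e₂ → e₁ = e₂ with hIsU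
  have hedge_of_u : ∀ (i : ZMod (t*k)) (e), e ∈ JNedges t k → JNu (t*k) k i ∈ e →
      e = JNL (t*k) k i := by
    intro i e he hm
    rcases mem_JNedges.mp he with ⟨a, rfl⟩ | ⟨s, j, rfl⟩
    · rw [u_mem_JNL.mp hm]
    · exact absurd hm u_notMem_JNC
  have hIsU_u : ∀ i, IsU (JNu (t*k) k i) := by
    intro i e₁ h₁ e₂ h₂ m₁ m₂
    rw [hedge_of_u i e₁ h₁ m₁, hedge_of_u i e₂ h₂ m₂]
  have hJNL_mem : ∀ i, JNL (t*k) k i ∈ JNedges t k := fun i => mem_JNedges.mpr (Or.inl ⟨i, rfl⟩)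
  have hJNC_mem : ∀ (s : Fin t) (j : Fin (k-3)),
      JNC (t*k) k ((((j : ℕ) + 1) + (s : ℕ) * k : ℕ) : ZMod (t*k)) j ∈ JNedges t k :=
    fun s j => mem_JNedges.mpr (Or.inr ⟨s, j, rfl⟩)
  have hw_not : ∀ (i : ZMod (t*k)) (j : Fin (k-3)), ¬ IsU (JNw (t*k) k i j) := by
    intro i j hU
    obtain ⟨s, hs, m, hm, hsm⟩ := JN_cover (by omega) ((j:ℕ)+1) i
    have hwC : JNw (t*k) k i j ∈ JNC (t*k) k ((((j:ℕ)+1) + s*k : ℕ) : ZMod (t*k)) j := by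
      rw [w_mem_JNC]
      refine ⟨rfl, m, hm, ?_⟩
      rw [← hsm]; push_cast; ring
    have hwL : JNw (t*k) k i j ∈ JNL (t*k) k i := w_mem_JNL.mpr rfl
    have := hU _ (hJNL_mem i) _ (hJNC_mem ⟨s, hs⟩ j) hwL hwC
    exact JNL_ne_JNC this
  have hv_not : ∀ (i : ZMod (t*k)), ¬ IsU (JNv (t*k) k i) := by
    intro i hU
    have h1 : JNv (t*k) k i ∈ JNL (t*k) k i := v_mem_JNL.mpr (Or.inl rfl)
    have h2 : JNv (t*k) k i ∈ JNL (t*k) k (i-1) := v_mem_JNL.mpr (Or.inr (by ring))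
    have := JNL_inj (hU _ (hJNL_mem i) _ (hJNL_mem (i-1)) h1 h2)
    exact hone (by linear_combination this)
  have hIsU_iff : ∀ x, IsU x ↔ IsU (φ x) := by
    intro x
    constructor
    · intro h f₁ hf₁ f₂ hf₂ m₁ m₂
      obtain ⟨e₁, he₁, rfl⟩ := hsurj f₁ hf₁
      obtain ⟨e₂, he₂, rfl⟩ := hsurj f₂ hf₂
      have hx₁ : x ∈ e₁ := by
        obtain ⟨y, hy, hyx⟩ := Finset.mem_image.mp m₁
        rwa [← φ.injective hyx]
      have hx₂ : x ∈ e₂ := by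
        obtain ⟨y, hy, hyx⟩ := Finset.mem_image.mp m₂
        rwa [← φ.injective hyx]
      rw [h e₁ he₁ e₂ he₂ hx₁ hx₂]
    · intro h e₁ he₁ e₂ he₂ m₁ m₂
      exact himg_inj _ _ (h _ (hφ _ he₁) _ (hφ _ he₂)
        (Finset.mem_image_of_mem φ m₁) (Finset.mem_image_of_mem φ m₂))
  -- images of L-edges are L-edges
  have hLimg : ∀ i, ∃ c, (JNL (t*k) k i).image φ = JNL (t*k) k c := by
    intro i
    rcases mem_JNedges.mp (hφ _ (hJNL_mem i)) with ⟨c, hc⟩ | ⟨s, j, hC⟩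
    · exact ⟨c, hc⟩
    · exfalso
      have hu : φ (JNu (t*k) k i) ∈ (JNL (t*k) k i).image φ :=
        Finset.mem_image_of_mem φ (u_mem_JNL.mpr rfl)
      rw [hC, mem_JNC] at hu
      obtain ⟨m, hm, he⟩ := hu
      have := (hIsU_iff (JNu (t*k) k i)).mp (hIsU_u i)
      rw [he] at this
      exact hw_not _ _ this
  choose σ hσ using hLimg
  -- images of cyclic edges are cyclic edges
  have hCimg : ∀ (b : ZMod (t*k)) (j : Fin (k-3)), JNC (t*k) k b j ∈ JNedges t k →
      ∃ (s' : Fin t) (j' : Fin (k-3)),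
        (JNC (t*k) k b j).image φ
          = JNC (t*k) k ((((j' : ℕ) + 1) + (s' : ℕ) * k : ℕ) : ZMod (t*k)) j' := by
    intro b j hmem
    rcases mem_JNedges.mp (hφ _ hmem) with ⟨c, hc⟩ | ⟨s', j', hC⟩
    · exfalso
      have huc : JNu (t*k) k c ∈ (JNC (t*k) k b j).image φ := by
        rw [hc]; exact u_mem_JNL.mpr rfl
      obtain ⟨x, hx, hxc⟩ := Finset.mem_image.mp huc
      rw [mem_JNC] at hx
      obtain ⟨m, hm, rfl⟩ := hx
      have : IsU (φ (JNw (t*k) k (b + (m:ℕ)) j)) := by rw [hxc]; exact hIsU_u c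
      exact hw_not _ _ ((hIsU_iff _).mpr this)
    · exact ⟨s', j', hC⟩
  -- σ basic properties
  have hσinj : Function.Injective σ := by
    intro a b h
    have : (JNL (t*k) k a).image φ = (JNL (t*k) k b).image φ := by rw [hσ, hσ, h]
    exact JNL_inj (himg_inj _ _ this)
  have hσ1 : σ 1 = 1 := JNL_inj ((hσ 1).symm.trans hE1)
  have hσadj : ∀ a, σ (a+1) = σ a + 1 ∨ σ a = σ (a+1) + 1 := by
    intro a
    have hnd : ¬ Disjoint (JNL (t*k) k a) (JNL (t*k) k (a+1)) :=
      JNL_adj.mpr (Or.inr (Or.inr rfl))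
    have hnd2 : ¬ Disjoint (JNL (t*k) k (σ a)) (JNL (t*k) k (σ (a+1))) := by
      rw [← hσ, ← hσ]
      rwa [Finset.disjoint_image φ.injective]
    rcases JNL_adj.mp hnd2 with h | h | h
    · exact absurd (by linear_combination -(hσinj h) : (1 : ZMod (t*k)) = 0) hone
    · exact Or.inr h
    · exact Or.inl h
  have h21 : (2 : ZMod (t*k)) = 1 + 1 := by ring
  have hσ2 : σ 2 = 2 ∨ σ 2 = 0 := by
    rcases hσadj 1 with h | h
    · left; rw [h21, h, hσ1]
    · right
      rw [hσ1] at h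
      rw [h21]
      linear_combination -h
  have hA : σ 2 = 2 → ∀ x, σ x = x := by
    intro h2
    have key : ∀ m : ℕ, σ (1 + (m : ZMod (t*k))) = 1 + (m : ZMod (t*k)) ∧
        σ (1 + (m : ZMod (t*k)) + 1) = 1 + (m : ZMod (t*k)) + 1 := by
      intro m
      induction m with
      | zero =>
        simp only [Nat.cast_zero, add_zero]
        exact ⟨hσ1, by rw [← h21]; exact h2⟩
      | succ m ih =>
        have e : ((m+1 : ℕ) : ZMod (t*k)) = (m : ZMod (t*k)) + 1 := by push_cast; ring
        rw [e, ← add_assoc]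
        refine ⟨ih.2, ?_⟩
        rcases hσadj (1 + (m : ZMod (t*k)) + 1) with h | h
        · rw [h, ih.2]
        · exfalso
          have hh : σ (1 + (m : ZMod (t*k)) + 1 + 1) = σ (1 + (m : ZMod (t*k))) := by
            rw [ih.1]; rw [ih.2] at h; linear_combination -h
          exact htwo (by linear_combination hσinj hh)
    intro x
    have e2 : (((x-1).val : ℕ) : ZMod (t*k)) = x - 1 := ZMod.natCast_zmod_val _
    have := (key (x-1).val).1
    rw [e2] at this
    have e3 : (1 : ZMod (t*k)) + (x - 1) = x := by ring
    rw [e3] at this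
    exact this
  have hB : σ 2 = 0 → ∀ x, σ x = 2 - x := by
    intro h2
    have key : ∀ m : ℕ, σ (1 + (m : ZMod (t*k))) = 1 - (m : ZMod (t*k)) ∧
        σ (1 + (m : ZMod (t*k)) + 1) = 1 - (m : ZMod (t*k)) - 1 := by
      intro m
      induction m with
      | zero =>
        simp only [Nat.cast_zero, add_zero, sub_zero]
        refine ⟨hσ1, ?_⟩
        rw [← h21, h2]; ring
      | succ m ih =>
        have e : ((m+1 : ℕ) : ZMod (t*k)) = (m : ZMod (t*k)) + 1 := by push_cast; ring
        rw [e, ← add_assoc]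
        constructor
        · rw [ih.2]; ring
        · rcases hσadj (1 + (m : ZMod (t*k)) + 1) with h | h
          · exfalso
            have hh : σ (1 + (m : ZMod (t*k)) + 1 + 1) = σ (1 + (m : ZMod (t*k))) := by
              rw [ih.1, h, ih.2]; ring
            exact htwo (by linear_combination hσinj hh)
          · rw [ih.2] at h; linear_combination -h
    intro x
    have e2 : (((x-1).val : ℕ) : ZMod (t*k)) = x - 1 := ZMod.natCast_zmod_val _
    have := (key (x-1).val).1
    rw [e2] at this
    have e3 : (1 : ZMod (t*k)) + (x - 1) = x := by ring
    rw [e3] at this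
    linear_combination this
  -- common tool: the image of a cyclic edge, given σ values at its ends, has determined start
  have hmeet : ∀ (a b : ZMod (t*k)) (j j' : Fin (k-3)),
      (JNC (t*k) k a j).image φ = JNC (t*k) k b j' →
      ∀ m : ℕ, m < k → ∃ m' : ℕ, m' < k ∧ b + (m' : ℕ) = σ (a + (m : ℕ)) := by
    intro a b j j' hC' m hm
    have hwC : JNw (t*k) k (a + (m:ℕ)) j ∈ JNC (t*k) k a j := w_mem_JNC.mpr ⟨rfl, m, hm, rfl⟩
    have hwL : JNw (t*k) k (a + (m:ℕ)) j ∈ JNL (t*k) k (a + (m:ℕ)) := w_mem_JNL.mpr rfl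
    have h1 : φ (JNw (t*k) k (a + (m:ℕ)) j) ∈ JNC (t*k) k b j' := by
      rw [← hC']; exact Finset.mem_image_of_mem _ hwC
    have h2 : φ (JNw (t*k) k (a + (m:ℕ)) j) ∈ JNL (t*k) k (σ (a + (m:ℕ))) := by
      rw [← hσ]; exact Finset.mem_image_of_mem _ hwL
    obtain ⟨-, m', hm', he⟩ := JNC_JNL_inter h1 h2
    exact ⟨m', hm', he⟩
  haveI : NeZero k := ⟨by omega⟩
  have hk0 : ((k : ℕ) : ZMod k) = 0 := ZMod.natCast_self k
  have hkm1 : ((k-1 : ℕ) : ZMod k) = -1 := by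
    rw [Nat.cast_sub (by omega : 1 ≤ k), hk0]; push_cast; ring
  -- rule out the reflection
  have hnotB : σ 2 ≠ 0 := by
    intro h2
    have hrefl := hB h2
    set jn : ℕ := if k = 4 then 0 else 2 with hjn
    have hjlt : jn < k - 3 := by
      rw [hjn]; split_ifs with h
      · omega
      · rcases hk with h4 | h6 <;> omega
    set j : Fin (k-3) := ⟨jn, hjlt⟩ with hj
    have hCmem : JNC (t*k) k (((jn+1 : ℕ)) : ZMod (t*k)) j ∈ JNedges t k := by
      have := hJNC_mem ⟨0, by omega⟩ j
      simpa using this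
    obtain ⟨s', j', hC'⟩ := hCimg _ j hCmem
    obtain ⟨m₀, hm₀, e₀⟩ := hmeet _ _ _ _ hC' 0 (by omega)
    obtain ⟨m₁, hm₁, e₁⟩ := hmeet _ _ _ _ hC' (k-1) (by omega)
    rw [hrefl] at e₀ e₁
    push_cast at e₀ e₁
    have hblock : (m₀ : ZMod (t*k)) = (m₁ : ZMod (t*k)) + ((k-1:ℕ) : ZMod (t*k)) := by
      linear_combination e₀ - e₁
    obtain ⟨hm10, hm0k⟩ := JN_block (by omega) h2k hm₀ hm₁ hblock
    rw [hm10] at e₁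
    push_cast at e₁
    have hψ := congrArg (ZMod.castHom (dvd_mul_left k t) (ZMod k)) e₁
    simp only [map_add, map_sub, map_mul, map_natCast, map_one, map_ofNat, map_zero] at hψ
    rw [hkm1, hk0] at hψ
    rcases hk with h4 | h6
    · have hjn0 : jn = 0 := by rw [hjn, if_pos h4]
      rw [hjn0] at hψ
      have h' : (((j':ℕ)+1 : ℕ) : ZMod k) = ((2 : ℕ) : ZMod k) := by
        push_cast at hψ ⊢
        linear_combination hψ
      have := JN_cast_inj (by omega) (by omega) h'
      omega
    · have hjn2 : jn = 2 := by rw [hjn, if_neg (by omega)]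
      rw [hjn2] at hψ
      have h' : (((j':ℕ)+1 : ℕ) : ZMod k) = 0 := by
        push_cast at hψ ⊢
        linear_combination hψ
      rw [ZMod.natCast_eq_zero_iff] at h'
      have := Nat.le_of_dvd (by omega) h'
      omega
  have hid : ∀ x, σ x = x := hA (hσ2.resolve_right hnotB)
  have hLfix : ∀ i, (JNL (t*k) k i).image φ = JNL (t*k) k i := by
    intro i; rw [hσ, hid]
  have hvfix : ∀ i, φ (JNv (t*k) k i) = JNv (t*k) k i := by
    intro i
    have h1 : φ (JNv (t*k) k i) ∈ JNL (t*k) k i := by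
      rw [← hLfix i]; exact Finset.mem_image_of_mem _ (v_mem_JNL.mpr (Or.inl rfl))
    have h2 : φ (JNv (t*k) k i) ∈ JNL (t*k) k (i-1) := by
      rw [← hLfix (i-1)]
      exact Finset.mem_image_of_mem _ (v_mem_JNL.mpr (Or.inr (by ring)))
    rcases mem_JNL.mp h1 with h | h | h | ⟨j, h⟩
    · exact h
    · exfalso; rw [h] at h2
      exact hone (by linear_combination u_mem_JNL.mp h2)
    · exfalso; rw [h] at h2
      rcases v_mem_JNL.mp h2 with h' | h'
      · exact htwo (by linear_combination h')
      · exact hone (by linear_combination h')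
    · exfalso; rw [h] at h2
      exact hone (by linear_combination w_mem_JNL.mp h2)
  have hCfix : ∀ (s : Fin t) (jj : Fin (k-3)),
      (JNC (t*k) k ((((jj:ℕ)+1) + (s:ℕ)*k : ℕ) : ZMod (t*k)) jj).image φ
        = JNC (t*k) k ((((jj:ℕ)+1) + (s:ℕ)*k : ℕ) : ZMod (t*k)) jj := by
    intro s jj
    obtain ⟨s', j', hC'⟩ := hCimg _ jj (hJNC_mem s jj)
    obtain ⟨m₀, hm₀, e₀⟩ := hmeet _ _ _ _ hC' 0 (by omega)
    obtain ⟨m₁, hm₁, e₁⟩ := hmeet _ _ _ _ hC' (k-1) (by omega)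
    rw [hid] at e₀ e₁
    push_cast at e₀ e₁
    have hblock : (m₁ : ZMod (t*k)) = (m₀ : ZMod (t*k)) + ((k-1:ℕ) : ZMod (t*k)) := by
      linear_combination e₁ - e₀
    obtain ⟨hm00, hm1k⟩ := JN_block (by omega) h2k hm₁ hm₀ hblock
    rw [hm00] at e₀
    push_cast at e₀
    have hψ := congrArg (ZMod.castHom (dvd_mul_left k t) (ZMod k)) e₀
    simp only [map_add, map_sub, map_mul, map_natCast, map_one, map_ofNat, map_zero] at hψ
    simp only [hk0] at hψ
    have hj'jj : j' = jj := by
      refine Fin.ext (JN_cast_inj (n := k) (lt_of_lt_of_le j'.isLt (by omega))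
        (lt_of_lt_of_le jj.isLt (by omega)) ?_)
      linear_combination hψ
    subst hj'jj
    rw [hC']
    have hidx : ((((j':ℕ)+1) + (s':ℕ)*k : ℕ) : ZMod (t*k))
        = ((((j':ℕ)+1) + (s:ℕ)*k : ℕ) : ZMod (t*k)) := by
      push_cast
      linear_combination e₀
    rw [hidx]
  have hwfix : ∀ (i : ZMod (t*k)) (jj : Fin (k-3)), φ (JNw (t*k) k i jj) = JNw (t*k) k i jj := by
    intro i jj
    obtain ⟨s, hs, m, hm, hsm⟩ := JN_cover (by omega) ((jj:ℕ)+1) i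
    have hwC : JNw (t*k) k i jj ∈ JNC (t*k) k ((((jj:ℕ)+1) + s*k : ℕ) : ZMod (t*k)) jj := by
      rw [w_mem_JNC]
      exact ⟨rfl, m, hm, by rw [← hsm]; push_cast; ring⟩
    have h1 : φ (JNw (t*k) k i jj) ∈ JNC (t*k) k ((((jj:ℕ)+1) + s*k : ℕ) : ZMod (t*k)) jj := by
      have hfx := hCfix ⟨s, hs⟩ jj
      rw [← hfx]
      exact Finset.mem_image_of_mem _ hwC
    have h2 : φ (JNw (t*k) k i jj) ∈ JNL (t*k) k i := by
      rw [← hLfix i]; exact Finset.mem_image_of_mem _ (w_mem_JNL.mpr rfl)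
    exact (JNC_JNL_inter h1 h2).1
  have hufix : ∀ i, φ (JNu (t*k) k i) = JNu (t*k) k i := by
    intro i
    have h1 : φ (JNu (t*k) k i) ∈ JNL (t*k) k i := by
      rw [← hLfix i]; exact Finset.mem_image_of_mem _ (u_mem_JNL.mpr rfl)
    rcases mem_JNL.mp h1 with h | h | h | ⟨j, h⟩
    · exact absurd (φ.injective (h.trans (hvfix i).symm)) (by simp [JNu, JNv])
    · exact h
    · exact absurd (φ.injective (h.trans (hvfix (i+1)).symm)) (by simp [JNu, JNv])
    · exact absurd (φ.injective (h.trans (hwfix i j).symm)) (by simp [JNu, JNw])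
  apply Equiv.ext
  intro x
  rcases x with i | i | ⟨i, j⟩
  · exact hufix i
  · exact hvfix i
  · exact hwfix i j
end
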